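/- Suppose F : [0,∞)×[0,1]×ℝ → [0,1] is continuous, concave in its first two variables, nondecreasing in the direction (0,1,t) at each point (t,A,λ), and equals 1 whenever λ < 0. Then for any interval I, any nonnegative integrable f on I, and any finite Carleson sequence (α_J)_{J∈D(I)} with constant at most 1, F(⟨f⟩_I, (1/|I|)∑_J α_J|J|, λ) ≥ (1/|I|)|{x ∈ I : ∑_{J∈D(I)} α_J⟨f⟩_J 1_J(x) > λ}|. -/
import Mathlib


open MeasureTheory

noncomputable section

/-- The dyadic subinterval of `I = [a,b)` at generation `n` with index `k`. -/
def dyadIcoI (a b : ℝ) (n k : ℕ) : Set ℝ :=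
  Set.Ico (a + (b - a) * ((k : ℝ) / 2 ^ n)) (a + (b - a) * (((k : ℝ) + 1) / 2 ^ n))

/-- The average `⟨f⟩_J` of `f` over the dyadic subinterval of `[a,b)` indexed by `(n,k)`. -/
def dyadAvgI (a b : ℝ) (f : ℝ → ℝ) (n k : ℕ) : ℝ :=
  ((2 : ℝ) ^ n / (b - a)) * ∫ t in dyadIcoI a b n k, f t

/-- `(m,j)` indexes a dyadic subinterval of the dyadic interval indexed by `(n,k)`. -/
def dyadMem (n k m j : ℕ) : Prop :=
  n ≤ m ∧ k * 2 ^ (m - n) ≤ j ∧ j < (k + 1) * 2 ^ (m - n)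

/-- The positive dyadic shift `𝓐f = ∑_{J ∈ 𝒟(I)} α_J ⟨f⟩_J 1_J` on `I = [a,b)`. -/
def shiftOpI (a b : ℝ) (α : ℕ → ℕ → ℝ) (f : ℝ → ℝ) (t : ℝ) : ℝ :=
  ∑' p : ℕ × ℕ, α p.1 p.2 * dyadAvgI a b f p.1 p.2 * (dyadIcoI a b p.1 p.2).indicator 1 t

/-- `α` has Carleson constant at most `1`:
`(1/|J|) ∑_{K ∈ 𝒟(J)} α_K |K| ≤ 1` for every dyadic `J ⊆ I`  (the lengths normalize:
`|J| = (b-a) 2⁻ⁿ`, so the condition does not depend on `a, b`). -/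
def CarlesonLeOne (α : ℕ → ℕ → ℝ) : Prop :=
  ∀ n k : ℕ, k < 2 ^ n →
    (∑' p : ℕ × ℕ,
        {q : ℕ × ℕ | dyadMem n k q.1 q.2}.indicator
          (fun q => α q.1 q.2 * ((2 : ℝ) ^ q.1)⁻¹) p) ≤ ((2 : ℝ) ^ n)⁻¹

/-- The normalized total mass `(1/|I|) ∑_{J ∈ 𝒟(I)} α_J |J|`. -/
def totalMass (α : ℕ → ℕ → ℝ) : ℝ := ∑' p : ℕ × ℕ, α p.1 p.2 * ((2 : ℝ) ^ p.1)⁻¹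
section AuxLemmas

instance (n k m j : ℕ) : Decidable (dyadMem n k m j) :=
  inferInstanceAs (Decidable (_ ∧ _ ∧ _))

/-- Left endpoint. -/
def dyadPt (a b : ℝ) (n k : ℕ) : ℝ := a + (b - a) * ((k : ℝ) / 2 ^ n)

lemma dyadIcoI_eq (a b : ℝ) (n k : ℕ) :
    dyadIcoI a b n k = Set.Ico (dyadPt a b n k) (dyadPt a b n (k + 1)) := by
  unfold dyadIcoI dyadPt; push_cast; ring_nf

lemma dyadPt_succ_left (a b : ℝ) (n k : ℕ) : dyadPt a b (n + 1) (2 * k) = dyadPt a b n k := by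
  unfold dyadPt; push_cast; ring

lemma dyadPt_succ_right (a b : ℝ) (n k : ℕ) :
    dyadPt a b (n + 1) (2 * k + 2) = dyadPt a b n (k + 1) := by
  unfold dyadPt; push_cast; ring

lemma dyadPt_mono (a b : ℝ) (hab : a ≤ b) (n : ℕ) {k j : ℕ} (h : k ≤ j) :
    dyadPt a b n k ≤ dyadPt a b n j := by
  unfold dyadPt
  have h1 : (k:ℝ) ≤ j := by exact_mod_cast h
  have hd : (0:ℝ) < 2 ^ n := by positivity
  have h2 : (k:ℝ)/2^n ≤ (j:ℝ)/2^n := by gcongr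
  nlinarith

lemma myDivPowLe {n m k j : ℕ} (hnm : n ≤ m) (h : k * 2 ^ (m - n) ≤ j) :
    (k : ℝ) / 2 ^ n ≤ (j : ℝ) / 2 ^ m := by
  obtain ⟨d, rfl⟩ : ∃ d, m = n + d := ⟨m - n, by omega⟩
  rw [Nat.add_sub_cancel_left] at h
  rw [div_le_div_iff₀ (by positivity) (by positivity)]
  calc (k : ℝ) * 2 ^ (n + d) = ((k * 2 ^ d : ℕ) : ℝ) * 2 ^ n := by push_cast; ring
    _ ≤ (j : ℝ) * 2 ^ n := by
        have : ((k * 2 ^ d : ℕ) : ℝ) ≤ (j:ℝ) := by exact_mod_cast h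
        nlinarith [pow_pos (by norm_num : (0:ℝ) < 2) n]

lemma dyadPt_le_of_mul_le (a b : ℝ) (hab : a ≤ b) {n m k j : ℕ} (hnm : n ≤ m)
    (h : k * 2 ^ (m - n) ≤ j) : dyadPt a b n k ≤ dyadPt a b m j := by
  unfold dyadPt
  have := myDivPowLe hnm h
  nlinarith [this]

lemma dyadPt_le_of_le_mul (a b : ℝ) (hab : a ≤ b) {n m k j : ℕ} (hnm : n ≤ m)
    (h : j ≤ k * 2 ^ (m - n)) : dyadPt a b m j ≤ dyadPt a b n k := by
  unfold dyadPt
  have h2 : (j : ℝ) / 2 ^ m ≤ (k : ℝ) / 2 ^ n := by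
    obtain ⟨d, rfl⟩ : ∃ d, m = n + d := ⟨m - n, by omega⟩
    rw [Nat.add_sub_cancel_left] at h
    rw [div_le_div_iff₀ (by positivity) (by positivity)]
    calc (j : ℝ) * 2 ^ n ≤ ((k * 2 ^ d : ℕ) : ℝ) * 2 ^ n := by
          have : (j:ℝ) ≤ ((k * 2 ^ d : ℕ) : ℝ) := by exact_mod_cast h
          nlinarith [pow_pos (by norm_num : (0:ℝ) < 2) n]
      _ = (k : ℝ) * 2 ^ (n + d) := by push_cast; ring
  nlinarith [h2]

lemma dyadIcoI_subset (a b : ℝ) (hab : a ≤ b) {n k m j : ℕ} (h : dyadMem n k m j) :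
    dyadIcoI a b m j ⊆ dyadIcoI a b n k := by
  obtain ⟨h1, h2, h3⟩ := h
  rw [dyadIcoI_eq, dyadIcoI_eq]
  exact Set.Ico_subset_Ico (dyadPt_le_of_mul_le a b hab h1 h2)
    (dyadPt_le_of_le_mul a b hab h1 (by omega))

lemma dyadIcoI_union (a b : ℝ) (hab : a ≤ b) (n k : ℕ) :
    dyadIcoI a b (n + 1) (2 * k) ∪ dyadIcoI a b (n + 1) (2 * k + 1) = dyadIcoI a b n k := by
  rw [dyadIcoI_eq, dyadIcoI_eq, dyadIcoI_eq, ← dyadPt_succ_left a b n k,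
    ← dyadPt_succ_right a b n k]
  have e1 : 2 * k + 1 + 1 = 2 * k + 2 := by ring
  rw [e1]
  exact Set.Ico_union_Ico_eq_Ico
    (dyadPt_mono a b hab (n+1) (by omega)) (dyadPt_mono a b hab (n+1) (by omega))

lemma dyadIcoI_disjoint (a b : ℝ) (n k : ℕ) :
    Disjoint (dyadIcoI a b (n + 1) (2 * k)) (dyadIcoI a b (n + 1) (2 * k + 1)) := by
  rw [dyadIcoI_eq, dyadIcoI_eq]
  exact Set.Ico_disjoint_Ico_same

lemma measurableSet_dyadIcoI (a b : ℝ) (n k : ℕ) : MeasurableSet (dyadIcoI a b n k) :=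
  measurableSet_Ico

lemma volume_dyadIcoI (a b : ℝ) (n k : ℕ) :
    volume (dyadIcoI a b n k) = ENNReal.ofReal ((b - a) / 2 ^ n) := by
  show volume (Set.Ico _ _) = _
  rw [Real.volume_Ico]
  congr 1
  ring

lemma dyadMem_self (n k : ℕ) : dyadMem n k n k := by
  refine ⟨le_rfl, ?_, ?_⟩ <;> simp

lemma dyadMem_zero {m j : ℕ} (h : j < 2 ^ m) : dyadMem 0 0 m j :=
  ⟨Nat.zero_le _, by simp, by simpa⟩

lemma dyadMem_lt {n k m j : ℕ} (h : dyadMem n k m j) (hk : k < 2 ^ n) : j < 2 ^ m := by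
  obtain ⟨h1, h2, h3⟩ := h
  calc j < (k + 1) * 2 ^ (m - n) := h3
    _ ≤ 2 ^ n * 2 ^ (m - n) := Nat.mul_le_mul_right _ (by omega)
    _ = 2 ^ m := by rw [← pow_add]; congr 1; omega

lemma dyadMem_split (n k m j : ℕ) :
    dyadMem n k m j ↔ (m = n ∧ j = k) ∨ dyadMem (n + 1) (2 * k) m j ∨
      dyadMem (n + 1) (2 * k + 1) m j := by
  unfold dyadMem
  rcases Nat.lt_or_ge m (n + 1) with hm | hm
  · constructor
    · rintro ⟨h1, h2, h3⟩
      have : m = n := by omega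
      subst this
      simp at h2 h3
      exact Or.inl ⟨rfl, by omega⟩
    · rintro (⟨rfl, rfl⟩ | ⟨h1, _⟩ | ⟨h1, _⟩) <;> try omega
      exact ⟨le_rfl, by simp⟩
  · obtain ⟨d, rfl⟩ : ∃ d, m = n + 1 + d := ⟨m - (n + 1), by omega⟩
    have e1 : n + 1 + d - n = d + 1 := by omega
    have e2 : n + 1 + d - (n + 1) = d := by omega
    rw [e1, e2]
    have key : ∀ c : ℕ, c * 2 ^ (d + 1) = 2 * c * 2 ^ d := fun c => by ring
    constructor
    · rintro ⟨-, h2, h3⟩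
      rw [key] at h2; rw [key] at h3
      rcases Nat.lt_or_ge j ((2 * k + 1) * 2 ^ d) with hj | hj
      · refine Or.inr (Or.inl ⟨by omega, by omega, hj⟩)
      · refine Or.inr (Or.inr ⟨by omega, hj, ?_⟩)
        calc j < 2 * (k + 1) * 2 ^ d := h3
          _ = (2 * k + 1 + 1) * 2 ^ d := by ring
    · rintro (⟨h, -⟩ | ⟨-, h2, h3⟩ | ⟨-, h2, h3⟩)
      · omega
      · refine ⟨by omega, ?_, ?_⟩
        · rw [key]; omega
        · rw [key]
          calc j < (2 * k + 1) * 2 ^ d := h3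
            _ ≤ 2 * (k + 1) * 2 ^ d := Nat.mul_le_mul_right _ (by omega)
      · refine ⟨by omega, ?_, ?_⟩
        · rw [key]
          calc 2 * k * 2 ^ d ≤ (2 * k + 1) * 2 ^ d := Nat.mul_le_mul_right _ (by omega)
            _ ≤ j := h2
        · rw [key]
          have : 2 * k + 1 + 1 = 2 * (k + 1) := by ring
          rwa [this] at h3

lemma dyadMem_not_both {n k m j : ℕ} (h1 : dyadMem (n + 1) (2 * k) m j)
    (h2 : dyadMem (n + 1) (2 * k + 1) m j) : False := by
  obtain ⟨-, -, h3⟩ := h1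
  obtain ⟨-, h4, -⟩ := h2
  have h5 : (2 * k + 1) * 2 ^ (m - (n + 1)) ≤ j := h4
  have h6 : j < (2 * k + 1) * 2 ^ (m - (n + 1)) := h3
  exact absurd (lt_of_lt_of_le h6 h5) (lt_irrefl _)

lemma dyadMem_child_ne {n k m j c : ℕ} (h : dyadMem (n + 1) c m j) : ¬(m = n ∧ j = k) := by
  rintro ⟨rfl, -⟩; exact absurd h.1 (by omega)

lemma dyadMem_child_left (n k : ℕ) : dyadMem n k (n + 1) (2 * k) :=
  (dyadMem_split n k (n + 1) (2 * k)).mpr (Or.inr (Or.inl (dyadMem_self _ _)))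

lemma dyadMem_child_right (n k : ℕ) : dyadMem n k (n + 1) (2 * k + 1) :=
  (dyadMem_split n k (n + 1) (2 * k + 1)).mpr (Or.inr (Or.inr (dyadMem_self _ _)))

lemma ite_dyad_split {β : Type*} [AddCommMonoid β] (n k : ℕ) (p : ℕ × ℕ) (x : β) :
    (if dyadMem n k p.1 p.2 then x else 0)
      = (if p = (n, k) then x else 0) + ((if dyadMem (n + 1) (2 * k) p.1 p.2 then x else 0)
        + (if dyadMem (n + 1) (2 * k + 1) p.1 p.2 then x else 0)) := by
  by_cases h1 : p = (n, k)
  · subst h1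
    have c0 : dyadMem n k n k := dyadMem_self n k
    have c2 : ¬ dyadMem (n + 1) (2 * k) n k := fun h => dyadMem_child_ne h ⟨rfl, rfl⟩
    have c3 : ¬ dyadMem (n + 1) (2 * k + 1) n k := fun h => dyadMem_child_ne h ⟨rfl, rfl⟩
    simp [c0, c2, c3]
  · have hne : ¬(p.1 = n ∧ p.2 = k) := fun hc => h1 (by rw [Prod.ext_iff]; exact hc)
    by_cases h2 : dyadMem (n + 1) (2 * k) p.1 p.2
    · have c0 : dyadMem n k p.1 p.2 := (dyadMem_split n k p.1 p.2).mpr (Or.inr (Or.inl h2))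
      have c3 : ¬ dyadMem (n + 1) (2 * k + 1) p.1 p.2 := fun h => dyadMem_not_both h2 h
      simp [c0, h1, h2, c3]
    · by_cases h3 : dyadMem (n + 1) (2 * k + 1) p.1 p.2
      · have c0 : dyadMem n k p.1 p.2 := (dyadMem_split n k p.1 p.2).mpr (Or.inr (Or.inr h3))
        simp [c0, h1, h2, h3]
      · have c0 : ¬ dyadMem n k p.1 p.2 := fun h => by
          rcases (dyadMem_split n k p.1 p.2).mp h with h' | h' | h'
          exacts [hne h', h2 h', h3 h']
        simp [c0, h1, h2, h3]

lemma sum_dyad_split {s : Finset (ℕ × ℕ)} (n k : ℕ) (X : ℕ × ℕ → ℝ)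
    (hX : (n, k) ∉ s → X (n, k) = 0) :
    (∑ p ∈ s, if dyadMem n k p.1 p.2 then X p else 0)
      = X (n, k) + (∑ p ∈ s, if dyadMem (n + 1) (2 * k) p.1 p.2 then X p else 0)
        + (∑ p ∈ s, if dyadMem (n + 1) (2 * k + 1) p.1 p.2 then X p else 0) := by
  rw [Finset.sum_congr rfl (fun p _ => ite_dyad_split n k p (X p)),
    Finset.sum_add_distrib, Finset.sum_add_distrib, Finset.sum_ite_eq' s (n, k) X]
  by_cases h : (n, k) ∈ s
  · rw [if_pos h]; ring
  · rw [if_neg h, hX h]; ring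

end AuxLemmas
/-- Any continuous `F : [0,∞) × [0,1] × ℝ → [0,1]` that is concave in its first two
variables, nondecreasing in the direction `(0,1,t)` at each point `(t,A,λ)`, and equal to
`1` for `λ < 0`, dominates the normalized distribution function of the dyadic shift: for
any interval `I = [a,b)`, any nonnegative integrable `f` on `I`, and any finite Carleson
sequence `α` with constant at most `1`,
`F(⟨f⟩_I, (1/|I|)∑ α_J|J|, λ) ≥ (1/|I|)|{x ∈ I : 𝓐f(x) > λ}|`. -/
theorem supersolution_dominates (F : ℝ → ℝ → ℝ → ℝ)
    (hFcont : Continuous fun p : ℝ × ℝ × ℝ => F p.1 p.2.1 p.2.2)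
    (hFrange : ∀ t A l : ℝ, 0 ≤ t → A ∈ Set.Icc (0:ℝ) 1 → F t A l ∈ Set.Icc (0:ℝ) 1)
    (hFconc : ∀ l : ℝ,
      ConcaveOn ℝ (Set.Ici (0:ℝ) ×ˢ Set.Icc (0:ℝ) 1) fun p : ℝ × ℝ => F p.1 p.2 l)
    (hFmono : ∀ t A l s₁ s₂ : ℝ, 0 ≤ t → 0 ≤ A → 0 ≤ s₁ → s₁ ≤ s₂ → A + s₂ ≤ 1 →
      F t (A + s₁) (l + s₁ * t) ≤ F t (A + s₂) (l + s₂ * t))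
    (hFobst : ∀ t A l : ℝ, 0 ≤ t → A ∈ Set.Icc (0:ℝ) 1 → l < 0 → F t A l = 1)
    (a b : ℝ) (hab : a < b)
    (f : ℝ → ℝ) (hf : ∀ t, 0 ≤ f t) (hfint : IntegrableOn f (Set.Ico a b))
    (α : ℕ → ℕ → ℝ) (hα0 : ∀ n k, 0 ≤ α n k) (hαsupp : ∀ n k, 2 ^ n ≤ k → α n k = 0)
    (hαfin : (Function.support fun p : ℕ × ℕ => α p.1 p.2).Finite)
    (hcar : CarlesonLeOne α) (l : ℝ) :
    (volume {t ∈ Set.Ico a b | l < shiftOpI a b α f t}).toReal / (b - a)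
      ≤ F (dyadAvgI a b f 0 0) (totalMass α) l := by
  classical
  have hba : (0:ℝ) < b - a := by linarith
  set s : Finset (ℕ × ℕ) := hαfin.toFinset with hs_def
  have hsupp : ∀ p : ℕ × ℕ, p ∉ s → α p.1 p.2 = 0 := by
    intro p hp
    by_contra h
    rw [hs_def] at hp
    exact hp (hαfin.mem_toFinset.mpr (Function.mem_support.mpr h))
  have hmem_s : ∀ p : ℕ × ℕ, p ∈ s → α p.1 p.2 ≠ 0 := by
    intro p hp
    rw [hs_def] at hp
    exact Function.mem_support.mp (hαfin.mem_toFinset.mp hp)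
  have hmem_lt : ∀ p : ℕ × ℕ, p ∈ s → p.2 < 2 ^ p.1 := by
    intro p hp
    by_contra h
    exact hmem_s p hp (hαsupp p.1 p.2 (by omega))
  obtain ⟨N, hN⟩ : ∃ N, ∀ m j : ℕ, N ≤ m → α m j = 0 := by
    refine ⟨(s.sup fun p : ℕ × ℕ => p.1) + 1, fun m j hm => ?_⟩
    by_contra h
    have hmem : (m, j) ∈ s := by
      rw [hs_def]
      exact hαfin.mem_toFinset.mpr (Function.mem_support.mpr h)
    have := Finset.le_sup (f := fun p : ℕ × ℕ => p.1) hmem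
    simp only at this
    omega
  set S : ℕ → ℕ → ℝ → ℝ := fun n k t => ∑ p ∈ s,
    if dyadMem n k p.1 p.2 then
      α p.1 p.2 * dyadAvgI a b f p.1 p.2 * (dyadIcoI a b p.1 p.2).indicator 1 t else 0
    with hS_def
  set M : ℕ → ℕ → ℝ := fun n k => ∑ p ∈ s,
    if dyadMem n k p.1 p.2 then α p.1 p.2 * ((2:ℝ) ^ p.1)⁻¹ else 0 with hM_def
  have hIco00 : dyadIcoI a b 0 0 = Set.Ico a b := by
    unfold dyadIcoI; norm_num
  have hInt : ∀ n k : ℕ, k < 2 ^ n → IntegrableOn f (dyadIcoI a b n k) := fun n k hk =>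
    hfint.mono_set (by rw [← hIco00]; exact dyadIcoI_subset a b hab.le (dyadMem_zero hk))
  have havg0 : ∀ n k : ℕ, 0 ≤ dyadAvgI a b f n k := by
    intro n k
    unfold dyadAvgI
    exact mul_nonneg (div_nonneg (by positivity) hba.le)
      (setIntegral_nonneg (measurableSet_dyadIcoI a b n k) fun t _ => hf t)
  have h2pow : ∀ n : ℕ, (2:ℕ) ^ (n+1) = 2 * 2 ^ n := fun n => by rw [pow_succ]; ring
  have hAvg : ∀ n k : ℕ, k < 2 ^ n → dyadAvgI a b f n k
      = (dyadAvgI a b f (n+1) (2*k) + dyadAvgI a b f (n+1) (2*k+1)) / 2 := by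
    intro n k hk
    have hkl : 2*k < 2^(n+1) := by have := h2pow n; omega
    have hkr : 2*k+1 < 2^(n+1) := by have := h2pow n; omega
    unfold dyadAvgI
    rw [← dyadIcoI_union a b hab.le n k,
      setIntegral_union (dyadIcoI_disjoint a b n k) (measurableSet_dyadIcoI a b (n+1) (2*k+1))
        (hInt _ _ hkl) (hInt _ _ hkr)]
    rw [pow_succ]
    ring
  have hM0 : ∀ n k, 0 ≤ M n k := by
    intro n k
    simp only [hM_def]
    apply Finset.sum_nonneg
    intro p hp
    split
    · exact mul_nonneg (hα0 _ _) (by positivity)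
    · exact le_rfl
  have hMtsum : ∀ n k : ℕ, (∑' p : ℕ × ℕ,
      ({q : ℕ × ℕ | dyadMem n k q.1 q.2}).indicator (fun q => α q.1 q.2 * ((2:ℝ)^q.1)⁻¹) p)
      = M n k := by
    intro n k
    rw [tsum_eq_sum (s := s) (fun p hp => by simp [Set.indicator_apply, hsupp p hp])]
    simp only [hM_def]
    refine Finset.sum_congr rfl fun p _ => ?_
    by_cases h : dyadMem n k p.1 p.2 <;>
      simp [Set.indicator_apply, Set.mem_setOf_eq, h]
  have hMle : ∀ n k : ℕ, k < 2 ^ n → (2:ℝ) ^ n * M n k ≤ 1 := by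
    intro n k hk
    have h1 := hcar n k hk
    rw [hMtsum n k] at h1
    have h2 : (0:ℝ) < 2 ^ n := by positivity
    calc (2:ℝ)^n * M n k ≤ 2^n * ((2:ℝ)^n)⁻¹ := by nlinarith
      _ = 1 := mul_inv_cancel₀ (ne_of_gt h2)
  have hMsplit : ∀ n k : ℕ,
      M n k = α n k * ((2:ℝ)^n)⁻¹ + M (n+1) (2*k) + M (n+1) (2*k+1) := by
    intro n k
    simp only [hM_def]
    exact sum_dyad_split n k (fun p => α p.1 p.2 * ((2:ℝ)^p.1)⁻¹)
      (fun h => by simp [hsupp _ h])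
  have hSzero : ∀ n k t, t ∉ dyadIcoI a b n k → S n k t = 0 := by
    intro n k t ht
    simp only [hS_def]
    apply Finset.sum_eq_zero
    intro p hp
    by_cases h : dyadMem n k p.1 p.2
    · have h2 : t ∉ dyadIcoI a b p.1 p.2 := fun hm => ht (dyadIcoI_subset a b hab.le h hm)
      simp [h, Set.indicator_of_notMem h2]
    · simp [h]
  have hSsplit : ∀ n k t,
      S n k t = α n k * dyadAvgI a b f n k * (dyadIcoI a b n k).indicator 1 t
        + S (n+1) (2*k) t + S (n+1) (2*k+1) t := by
    intro n k t
    simp only [hS_def]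
    exact sum_dyad_split n k
      (fun p => α p.1 p.2 * dyadAvgI a b f p.1 p.2 * (dyadIcoI a b p.1 p.2).indicator 1 t)
      (fun h => by simp [hsupp _ h])
  have hS_on_left : ∀ n k t, t ∈ dyadIcoI a b (n+1) (2*k) →
      S n k t = α n k * dyadAvgI a b f n k + S (n+1) (2*k) t := by
    intro n k t ht
    have h1 : t ∈ dyadIcoI a b n k := dyadIcoI_subset a b hab.le (dyadMem_child_left n k) ht
    have h2 : t ∉ dyadIcoI a b (n+1) (2*k+1) :=
      Set.disjoint_left.mp (dyadIcoI_disjoint a b n k) ht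
    rw [hSsplit n k t, Set.indicator_of_mem h1, hSzero _ _ _ h2]
    simp
  have hS_on_right : ∀ n k t, t ∈ dyadIcoI a b (n+1) (2*k+1) →
      S n k t = α n k * dyadAvgI a b f n k + S (n+1) (2*k+1) t := by
    intro n k t ht
    have h1 : t ∈ dyadIcoI a b n k := dyadIcoI_subset a b hab.le (dyadMem_child_right n k) ht
    have h2 : t ∉ dyadIcoI a b (n+1) (2*k) :=
      Set.disjoint_right.mp (dyadIcoI_disjoint a b n k) ht
    rw [hSsplit n k t, Set.indicator_of_mem h1, hSzero _ _ _ h2]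
    simp
  have hSmeas : ∀ n k, Measurable (S n k) := by
    intro n k
    simp only [hS_def]
    apply Finset.measurable_sum
    intro p hp
    by_cases h : dyadMem n k p.1 p.2
    · simp only [if_pos h]
      exact (measurable_one.indicator (measurableSet_dyadIcoI a b p.1 p.2)).const_mul _
    · simp only [if_neg h]
      exact measurable_const
  have hsetMeas : ∀ n k (c : ℝ), MeasurableSet {t ∈ dyadIcoI a b n k | c < S n k t} :=
    fun n k c => (measurableSet_dyadIcoI a b n k).inter
      (measurableSet_lt measurable_const (hSmeas n k))
  have hfinvol : ∀ n k (c : ℝ), volume {t ∈ dyadIcoI a b n k | c < S n k t} ≠ ⊤ := by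
    intro n k c
    have h1 : volume {t ∈ dyadIcoI a b n k | c < S n k t} ≤ volume (dyadIcoI a b n k) :=
      measure_mono (Set.sep_subset _ _)
    rw [volume_dyadIcoI] at h1
    exact ne_top_of_le_ne_top ENNReal.ofReal_ne_top h1
  -- base case of the Bellman induction: below the support of α
  have base : ∀ n k : ℕ, N ≤ n → ∀ lam : ℝ,
      (volume {t ∈ dyadIcoI a b n k | lam < S n k t}).toReal
        ≤ (b - a) / 2 ^ n * F (dyadAvgI a b f n k) (2 ^ n * M n k) lam := by
    intro n k hn lam
    have hS0 : ∀ t, S n k t = 0 := by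
      intro t
      simp only [hS_def]
      apply Finset.sum_eq_zero
      intro p hp
      by_cases h : dyadMem n k p.1 p.2
      · rw [if_pos h, hN p.1 p.2 (le_trans hn h.1)]; ring
      · rw [if_neg h]
    have hMz : M n k = 0 := by
      simp only [hM_def]
      apply Finset.sum_eq_zero
      intro p hp
      by_cases h : dyadMem n k p.1 p.2
      · rw [if_pos h, hN p.1 p.2 (le_trans hn h.1)]; ring
      · rw [if_neg h]
    rcases lt_or_ge lam 0 with hl | hl
    · have hset : {t ∈ dyadIcoI a b n k | lam < S n k t} = dyadIcoI a b n k := by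
        ext t
        simp [Set.mem_sep_iff, hS0, hl]
      rw [hset, volume_dyadIcoI, ENNReal.toReal_ofReal (div_nonneg hba.le (by positivity))]
      rw [hMz, mul_zero, hFobst _ _ _ (havg0 n k) ⟨le_rfl, zero_le_one⟩ hl, mul_one]
    · have hset : {t ∈ dyadIcoI a b n k | lam < S n k t} = ∅ := by
        ext t
        simp only [Set.mem_sep_iff, Set.mem_empty_iff_false, iff_false, not_and]
        intro _
        rw [hS0]
        linarith
      rw [hset]
      simp only [measure_empty, ENNReal.toReal_zero]
      have hr := hFrange (dyadAvgI a b f n k) (2^n * M n k) lam (havg0 n k)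
        (by rw [hMz, mul_zero]; exact ⟨le_rfl, zero_le_one⟩)
      exact mul_nonneg (div_nonneg hba.le (by positivity)) hr.1
  -- the Bellman induction
  have key : ∀ (d n k : ℕ), N ≤ n + d → k < 2 ^ n → ∀ lam : ℝ,
      (volume {t ∈ dyadIcoI a b n k | lam < S n k t}).toReal
        ≤ (b - a) / 2 ^ n * F (dyadAvgI a b f n k) (2 ^ n * M n k) lam := by
    intro d
    induction d with
    | zero => intro n k hd hk lam; exact base n k (by omega) lam
    | succ d ih =>
      intro n k hd hk lam
      rcases le_or_gt N n with hn | hn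
      · exact base n k hn lam
      have hkl : 2 * k < 2 ^ (n+1) := by have := h2pow n; omega
      have hkr : 2 * k + 1 < 2 ^ (n+1) := by have := h2pow n; omega
      set lam' : ℝ := lam - α n k * dyadAvgI a b f n k with hlam'
      have ihl := ih (n+1) (2*k) (by omega) hkl lam'
      have ihr := ih (n+1) (2*k+1) (by omega) hkr lam'
      have hset : {t ∈ dyadIcoI a b n k | lam < S n k t}
          = {t ∈ dyadIcoI a b (n+1) (2*k) | lam' < S (n+1) (2*k) t}
            ∪ {t ∈ dyadIcoI a b (n+1) (2*k+1) | lam' < S (n+1) (2*k+1) t} := by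
        ext t
        simp only [Set.mem_sep_iff, Set.mem_union]
        constructor
        · rintro ⟨htJ, hlt⟩
          rw [← dyadIcoI_union a b hab.le n k] at htJ
          rcases htJ with hL | hR
          · refine Or.inl ⟨hL, ?_⟩
            rw [hS_on_left n k t hL] at hlt
            rw [hlam']
            linarith
          · refine Or.inr ⟨hR, ?_⟩
            rw [hS_on_right n k t hR] at hlt
            rw [hlam']
            linarith
        · rintro (⟨ht, hlt⟩ | ⟨ht, hlt⟩)
          · refine ⟨dyadIcoI_subset a b hab.le (dyadMem_child_left n k) ht, ?_⟩
            rw [hS_on_left n k t ht]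
            rw [hlam'] at hlt
            linarith
          · refine ⟨dyadIcoI_subset a b hab.le (dyadMem_child_right n k) ht, ?_⟩
            rw [hS_on_right n k t ht]
            rw [hlam'] at hlt
            linarith
      have hdisj : Disjoint {t ∈ dyadIcoI a b (n+1) (2*k) | lam' < S (n+1) (2*k) t}
          {t ∈ dyadIcoI a b (n+1) (2*k+1) | lam' < S (n+1) (2*k+1) t} :=
        (dyadIcoI_disjoint a b n k).mono (Set.sep_subset _ _) (Set.sep_subset _ _)
      rw [hset, measure_union hdisj (hsetMeas (n+1) (2*k+1) lam'),
        ENNReal.toReal_add (hfinvol _ _ _) (hfinvol _ _ _)]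
      set tL : ℝ := dyadAvgI a b f (n+1) (2*k) with htL
      set tR : ℝ := dyadAvgI a b f (n+1) (2*k+1) with htR
      set AL : ℝ := 2 ^ (n+1) * M (n+1) (2*k) with hAL
      set AR : ℝ := 2 ^ (n+1) * M (n+1) (2*k+1) with hAR
      have hAL0 : 0 ≤ AL := by
        rw [hAL]; exact mul_nonneg (by positivity) (hM0 _ _)
      have hAR0 : 0 ≤ AR := by
        rw [hAR]; exact mul_nonneg (by positivity) (hM0 _ _)
      have hAL1 : AL ≤ 1 := hMle (n+1) (2*k) hkl
      have hAR1 : AR ≤ 1 := hMle (n+1) (2*k+1) hkr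
      set Abar : ℝ := (AL + AR) / 2 with hAbar
      have hAbar0 : 0 ≤ Abar := by
        rw [hAbar]
        have : (0:ℝ) ≤ AL + AR := add_nonneg hAL0 hAR0
        linarith
      have hmemL : ((tL, AL) : ℝ × ℝ) ∈ Set.Ici (0:ℝ) ×ˢ Set.Icc (0:ℝ) 1 :=
        Set.mem_prod.mpr ⟨havg0 _ _, Set.mem_Icc.mpr ⟨hAL0, hAL1⟩⟩
      have hmemR : ((tR, AR) : ℝ × ℝ) ∈ Set.Ici (0:ℝ) ×ˢ Set.Icc (0:ℝ) 1 :=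
        Set.mem_prod.mpr ⟨havg0 _ _, Set.mem_Icc.mpr ⟨hAR0, hAR1⟩⟩
      have hcc : (1/2 : ℝ) * F tL AL lam' + (1/2 : ℝ) * F tR AR lam'
          ≤ F ((tL + tR)/2) Abar lam' := by
        have hc := (hFconc lam').2 hmemL hmemR
          (by norm_num : (0:ℝ) ≤ 1/2) (by norm_num : (0:ℝ) ≤ 1/2) (by norm_num)
        have hpt : ((1/2 : ℝ) • ((tL, AL) : ℝ × ℝ) + (1/2 : ℝ) • ((tR, AR) : ℝ × ℝ))
            = (((tL + tR)/2, (AL + AR)/2) : ℝ × ℝ) := by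
          rw [Prod.ext_iff]
          constructor <;> simp <;> ring
        rw [hpt] at hc
        rw [hAbar]
        simpa using hc
      have hAvg_eq : dyadAvgI a b f n k = (tL + tR)/2 := hAvg n k hk
      have hAsum : Abar + α n k = 2 ^ n * M n k := by
        rw [hAbar, hAL, hAR, hMsplit n k]
        have h2 : ((2:ℝ)^n) ≠ 0 := by positivity
        rw [pow_succ]
        field_simp
        ring
      have hmono : F (dyadAvgI a b f n k) Abar lam'
          ≤ F (dyadAvgI a b f n k) (2 ^ n * M n k) lam := by
        have hm := hFmono (dyadAvgI a b f n k) Abar lam' 0 (α n k) (havg0 n k) hAbar0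
          le_rfl (hα0 n k) (by rw [hAsum]; exact hMle n k hk)
        rw [add_zero, zero_mul, add_zero, hAsum] at hm
        have hlam_eq : lam' + α n k * dyadAvgI a b f n k = lam := by
          rw [hlam']; ring
        rwa [hlam_eq] at hm
      have hpos : (0:ℝ) ≤ (b - a) / 2 ^ n := div_nonneg hba.le (by positivity)
      calc (volume {t ∈ dyadIcoI a b (n+1) (2*k) | lam' < S (n+1) (2*k) t}).toReal
            + (volume {t ∈ dyadIcoI a b (n+1) (2*k+1) | lam' < S (n+1) (2*k+1) t}).toReal
          ≤ (b - a)/2^(n+1) * F tL AL lam' + (b - a)/2^(n+1) * F tR AR lam' :=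
            add_le_add ihl ihr
        _ = (b - a)/2^n * ((1/2 : ℝ) * F tL AL lam' + (1/2 : ℝ) * F tR AR lam') := by
            rw [pow_succ]; ring
        _ ≤ (b - a)/2^n * F ((tL + tR)/2) Abar lam' := mul_le_mul_of_nonneg_left hcc hpos
        _ = (b - a)/2^n * F (dyadAvgI a b f n k) Abar lam' := by rw [hAvg_eq]
        _ ≤ (b - a)/2^n * F (dyadAvgI a b f n k) (2 ^ n * M n k) lam :=
            mul_le_mul_of_nonneg_left hmono hpos
  -- identify the tsum objects with the finite sums
  have hshift : ∀ t, shiftOpI a b α f t = S 0 0 t := by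
    intro t
    unfold shiftOpI
    rw [tsum_eq_sum (s := s) (fun p hp => by rw [hsupp p hp]; ring)]
    simp only [hS_def]
    refine Finset.sum_congr rfl fun p hp => ?_
    rw [if_pos (dyadMem_zero (hmem_lt p hp))]
  have hmass : totalMass α = M 0 0 := by
    unfold totalMass
    rw [tsum_eq_sum (s := s) (fun p hp => by rw [hsupp p hp]; ring)]
    simp only [hM_def]
    refine Finset.sum_congr rfl fun p hp => ?_
    rw [if_pos (dyadMem_zero (hmem_lt p hp))]
  have hfinal := key N 0 0 (by omega) (by norm_num) l
  rw [hIco00] at hfinal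
  simp only [pow_zero, div_one, one_mul] at hfinal
  have hsetEq : {t ∈ Set.Ico a b | l < shiftOpI a b α f t} = {t ∈ Set.Ico a b | l < S 0 0 t} := by
    ext t
    simp only [Set.mem_sep_iff, hshift]
  rw [hsetEq, hmass, div_le_iff₀ hba]
  linarith
end
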